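/- arXiv:2301.02202 — 3 statements merged into one kernel-verified Lean document; each statement's English description precedes it below -/
import Mathlib

section
/- Let R be a normal domain and J ⊆ R an ideal. If x ∈ R and r ∈ R satisfy x·I ⊆ \overline{J} for an ideal I with r ∈ \overline{I^n}, then x^n·r ∈ \overline{J^n}. More precisely: if x\overline{I} ⊆ \overline{J}, then x^n \overline{I^n} ⊆ \overline{J^n} for all n ∈ ℕ, where \overline{·} denotes integral closure of ideals. -/
noncomputable section

/-- `r` is integral over the ideal `J` : there is an equation
`r^t + a_1 r^{t-1} + ⋯ + a_t = 0` with `a_j ∈ J^j`. -/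
def memIntCl {R : Type} [CommRing R] (J : Ideal R) (r : R) : Prop :=
  ∃ t : ℕ, 0 < t ∧ ∃ a : ℕ → R, (∀ j, 1 ≤ j → j ≤ t → a j ∈ J ^ j) ∧
    r ^ t + ∑ j ∈ Finset.Icc 1 t, a j * r ^ (t - j) = 0

open Polynomial

/-- A monic-equation criterion for integrality. -/
theorem isIntegral_of_equation {A B : Type*} [CommRing A] [CommRing B] [Algebra A B]
    (z : B) {t : ℕ} (ht : 0 < t) (b : ℕ → A)
    (heq : z ^ t + ∑ j ∈ Finset.Icc 1 t, algebraMap A B (b j) * z ^ (t - j) = 0) :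
    IsIntegral A z := by
  refine ⟨X ^ t + ∑ j ∈ Finset.Icc 1 t, C (b j) * X ^ (t - j), ?_, ?_⟩
  · apply monic_X_pow_add
    apply lt_of_le_of_lt (degree_sum_le _ _)
    rw [Finset.sup_lt_iff (by exact_mod_cast WithBot.bot_lt_coe t)]
    intro j hj
    apply lt_of_le_of_lt (degree_C_mul_X_pow_le _ _)
    exact_mod_cast Nat.sub_lt ht (Finset.mem_Icc.mp hj).1
  · simpa only [eval₂_add, eval₂_X_pow, eval₂_finset_sum, eval₂_mul, eval₂_C] using heq

/-- Monomial-form of a memIntCl equation inside `R[X]`. -/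
theorem monomial_equation {R : Type} [CommRing R] (m t : ℕ) (u : R) (c : ℕ → R)
    (hsum : u ^ t + ∑ j ∈ Finset.Icc 1 t, c j * u ^ (t - j) = 0) :
    (monomial m u : R[X]) ^ t +
      ∑ j ∈ Finset.Icc 1 t, (monomial (m * j) (c j) : R[X]) * (monomial m u) ^ (t - j) = 0 := by
  have : ∀ j ∈ Finset.Icc 1 t,
      (monomial (m * j) (c j) : R[X]) * (monomial m u) ^ (t - j)
        = monomial (m * t) (c j * u ^ (t - j)) := by
    intro j hj
    obtain ⟨h1, h2⟩ := Finset.mem_Icc.mp hj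
    have h3 : m * j + m * (t - j) = m * t := by
      rw [← Nat.mul_add]
      congr 1
      omega
    rw [monomial_pow, monomial_mul_monomial, h3]
  rw [Finset.sum_congr rfl this, monomial_pow, ← map_sum, ← map_add, hsum, map_zero]

/-- memIntCl over a power of `J` gives integrality of the monomial over the Rees algebra. -/
theorem memIntCl.isIntegral {R : Type} [CommRing R] {J : Ideal R} {m : ℕ} {s : R}
    (hs : memIntCl (J ^ m) s) :
    IsIntegral (reesAlgebra J) ((monomial m s : R[X])) := by
  obtain ⟨t, ht, a, ha, heq⟩ := hs
  have hb : ∀ j, 1 ≤ j → j ≤ t → (monomial (m * j) (a j) : R[X]) ∈ reesAlgebra J := by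
    intro j h1 h2
    rw [reesAlgebra.monomial_mem, pow_mul]
    exact ha j h1 h2
  refine isIntegral_of_equation _ ht
    (fun j => if h : 1 ≤ j ∧ j ≤ t then ⟨monomial (m * j) (a j), hb j h.1 h.2⟩ else 0) ?_
  have : ∀ j ∈ Finset.Icc 1 t,
      algebraMap (reesAlgebra J) R[X]
          (if h : 1 ≤ j ∧ j ≤ t then (⟨monomial (m * j) (a j), hb j h.1 h.2⟩ :
            reesAlgebra J) else 0) * (monomial m s : R[X]) ^ (t - j)
        = (monomial (m * j) (a j) : R[X]) * (monomial m s : R[X]) ^ (t - j) := by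
    intro j hj
    obtain ⟨h1, h2⟩ := Finset.mem_Icc.mp hj
    rw [dif_pos ⟨h1, h2⟩]
    rfl
  rw [Finset.sum_congr rfl this]
  exact monomial_equation m t s a heq

/-- Integrality of the monomial over the Rees algebra gives memIntCl over the power. -/
theorem memIntCl_of_isIntegral {R : Type} [CommRing R] [Nontrivial R] {J : Ideal R} {m : ℕ}
    {s : R} (hs : IsIntegral (reesAlgebra J) ((monomial m s : R[X]))) :
    memIntCl (J ^ m) s := by
  obtain ⟨p, hp, hp0⟩ := hs
  set t := p.natDegree with htdef
  clear_value t
  have ht : 0 < t := by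
    rcases Nat.eq_zero_or_pos t with h0 | h
    · exfalso
      have hp1 : p = 1 := hp.natDegree_eq_zero.mp (htdef ▸ h0)
      rw [hp1, eval₂_one] at hp0
      exact one_ne_zero hp0
    · exact h
  have key : (0 : R) = ∑ k ∈ Finset.range (t + 1),
      ((p.coeff k : R[X])).coeff (m * (t - k)) * s ^ k := by
    have h1 : aeval (monomial m s : R[X]) p = 0 := hp0
    rw [aeval_eq_sum_range] at h1
    have h2 := congrArg (fun q : R[X] => q.coeff (m * t)) h1
    simp only [finset_sum_coeff, coeff_zero] at h2
    rw [← htdef] at h2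
    rw [← h2]
    apply Finset.sum_congr rfl
    intro k hk
    have hk' : k ≤ t := Nat.lt_succ_iff.mp (Finset.mem_range.mp hk)
    have hsmul : (p.coeff k) • (monomial m s : R[X]) ^ k
        = (p.coeff k : R[X]) * monomial (m * k) (s ^ k) := by
      rw [Algebra.smul_def, monomial_pow]
      rfl
    rw [hsmul]
    have hmt : m * t = m * (t - k) + m * k := by
      rw [← Nat.mul_add]
      congr 1
      omega
    rw [hmt, coeff_mul_monomial]
  refine ⟨t, ht, fun j => ((p.coeff (t - j) : R[X])).coeff (m * j), ?_, ?_⟩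
  · intro j h1 h2
    show ((p.coeff (t - j) : R[X])).coeff (m * j) ∈ (J ^ m) ^ j
    rw [← pow_mul]
    exact (p.coeff (t - j)).2 (m * j)
  · rw [Finset.sum_range_succ] at key
    have hlead : ((p.coeff t : R[X])).coeff (m * (t - t)) = 1 := by
      rw [Nat.sub_self, Nat.mul_zero]
      have : p.coeff t = 1 := htdef ▸ hp.coeff_natDegree
      rw [this]
      simp
    rw [hlead, one_mul] at key
    have hre : ∑ j ∈ Finset.Icc 1 t, ((p.coeff (t - j) : R[X])).coeff (m * j) * s ^ (t - j)
        = ∑ k ∈ Finset.range t, ((p.coeff k : R[X])).coeff (m * (t - k)) * s ^ k := by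
      refine Finset.sum_nbij' (fun j => t - j) (fun k => t - k) ?_ ?_ ?_ ?_ ?_
      · intro j hj
        simp only [Finset.mem_Icc] at hj
        simp only [Finset.mem_range]
        omega
      · intro k hk
        simp only [Finset.mem_range] at hk
        simp only [Finset.mem_Icc]
        omega
      · intro j hj
        simp only [Finset.mem_Icc] at hj
        omega
      · intro k hk
        simp only [Finset.mem_range] at hk
        omega
      · intro j hj
        simp only [Finset.mem_Icc] at hj
        have hj' : t - (t - j) = j := by omega
        simp only [hj']
    beta_reduce
    rw [hre]
    linear_combination -key

/-- If `x·\overline{I} ⊆ \overline{J}` then `x^n·\overline{I^n} ⊆ \overline{J^n}` for all `n`. -/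
theorem integral_closure_power_mult {R : Type} [CommRing R] [IsNoetherianRing R]
    [IsDomain R] [IsIntegrallyClosed R] (I J : Ideal R) (x : R)
    (h : ∀ r : R, memIntCl I r → memIntCl J (x * r)) :
    ∀ (n : ℕ) (r : R), memIntCl (I ^ n) r → memIntCl (J ^ n) (x ^ n * r) := by
  -- membership of a Rees-algebra element in the integral closure
  have base_mem : ∀ q : R[X], q ∈ reesAlgebra J → q ∈ integralClosure (reesAlgebra J) R[X] := by
    intro q hq
    exact isIntegral_algebraMap (x := (⟨q, hq⟩ : reesAlgebra J))
  -- step 2: x^m * (I^m) lands (as degree-m monomials) in the integral closure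
  have key : ∀ (m : ℕ) (c : R), c ∈ I ^ m →
      (monomial m (x ^ m * c) : R[X]) ∈ integralClosure (reesAlgebra J) R[X] := by
    intro m
    induction m with
    | zero =>
      intro c _
      apply base_mem
      rw [reesAlgebra.monomial_mem]
      simp
    | succ m ih =>
      intro c hc
      rw [pow_succ] at hc
      refine Submodule.mul_induction_on hc ?_ ?_
      · intro b hb y hy
        have h1 := ih b hb
        have h2 : (monomial 1 (x * y) : R[X]) ∈ integralClosure (reesAlgebra J) R[X] := by
          have hy' : memIntCl I y := by
            refine ⟨1, one_pos, fun _ => -y, ?_, ?_⟩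
            · intro j hj1 hj2
              have : j = 1 := le_antisymm hj2 hj1
              subst this
              simpa using neg_mem hy
            · simp
          have := (h y hy')
          rw [← pow_one J] at this
          exact this.isIntegral
        have := mul_mem h1 h2
        have heq : (monomial m (x ^ m * b) : R[X]) * monomial 1 (x * y)
            = monomial (m + 1) (x ^ (m + 1) * (b * y)) := by
          rw [monomial_mul_monomial]
          congr 1
          ring
        rwa [heq] at this
      · intro c1 c2 h1 h2
        have heq : (monomial (m + 1) (x ^ (m + 1) * (c1 + c2)) : R[X])
            = monomial (m + 1) (x ^ (m + 1) * c1) + monomial (m + 1) (x ^ (m + 1) * c2) := by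
          rw [mul_add, map_add]
        rw [heq]
        exact add_mem h1 h2
  intro n r hr
  obtain ⟨t, ht, a, ha, heq⟩ := hr
  -- coefficients for the equation of the monomial over the integral closure
  have hbmem : ∀ j, 1 ≤ j → j ≤ t →
      (monomial (n * j) (x ^ (n * j) * a j) : R[X]) ∈ integralClosure (reesAlgebra J) R[X] := by
    intro j h1 h2
    apply key
    rw [pow_mul]
    exact ha j h1 h2
  have hz : IsIntegral (integralClosure (reesAlgebra J) R[X])
      ((monomial n (x ^ n * r) : R[X])) := by
    refine isIntegral_of_equation _ ht
      (fun j => if hj : 1 ≤ j ∧ j ≤ t then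
        ⟨monomial (n * j) (x ^ (n * j) * a j), hbmem j hj.1 hj.2⟩ else 0) ?_
    have hcongr : ∀ j ∈ Finset.Icc 1 t,
        algebraMap (integralClosure (reesAlgebra J) R[X]) R[X]
            (if hj : 1 ≤ j ∧ j ≤ t then
              (⟨monomial (n * j) (x ^ (n * j) * a j), hbmem j hj.1 hj.2⟩ :
                integralClosure (reesAlgebra J) R[X]) else 0)
            * (monomial n (x ^ n * r) : R[X]) ^ (t - j)
          = (monomial (n * j) (x ^ (n * j) * a j) : R[X])
            * (monomial n (x ^ n * r) : R[X]) ^ (t - j) := by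
      intro j hj
      obtain ⟨h1, h2⟩ := Finset.mem_Icc.mp hj
      rw [dif_pos ⟨h1, h2⟩]
      rfl
    rw [Finset.sum_congr rfl hcongr]
    apply monomial_equation n t (x ^ n * r) (fun j => x ^ (n * j) * a j)
    -- the scalar equation: multiply heq by x^(n*t)
    have hterm : ∀ j ∈ Finset.Icc 1 t,
        x ^ (n * j) * a j * (x ^ n * r) ^ (t - j) = x ^ (n * t) * (a j * r ^ (t - j)) := by
      intro j hj
      obtain ⟨h1, h2⟩ := Finset.mem_Icc.mp hj
      rw [mul_pow, ← pow_mul]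
      have : n * j + n * (t - j) = n * t := by
        rw [← Nat.mul_add]
        congr 1
        omega
      calc x ^ (n * j) * a j * (x ^ (n * (t - j)) * r ^ (t - j))
          = x ^ (n * j) * x ^ (n * (t - j)) * (a j * r ^ (t - j)) := by ring
        _ = x ^ (n * t) * (a j * r ^ (t - j)) := by rw [← pow_add, this]
    rw [Finset.sum_congr rfl hterm, mul_pow, ← pow_mul, ← Finset.mul_sum]
    calc x ^ (n * t) * r ^ t + x ^ (n * t) * ∑ j ∈ Finset.Icc 1 t, a j * r ^ (t - j)
        = x ^ (n * t) * (r ^ t + ∑ j ∈ Finset.Icc 1 t, a j * r ^ (t - j)) := by ring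
      _ = 0 := by rw [heq, mul_zero]
  -- transitivity: the integral closure is integrally closed
  have h2 : (monomial n (x ^ n * r) : R[X]) ∈
      integralClosure (integralClosure (reesAlgebra J) R[X]) R[X] := hz
  rw [integralClosure_idem] at h2
  obtain ⟨w, hw⟩ := Algebra.mem_bot.mp h2
  have h3 : (monomial n (x ^ n * r) : R[X]) ∈ integralClosure (reesAlgebra J) R[X] := by
    rw [← hw]
    exact w.2
  exact memIntCl_of_isIntegral h3

end
end

section
/- Let (R,m) be an excellent local Cohen-Macaulay normal domain of dimension d, J generated by at most h elements, and x such that ⊕ \overline{J^n}/\overline{J^{n+1}} ⊗ R_x is Cohen-Macaulay. If there is C with x^C H^i_m(\overline{J^n}/\overline{J^{n+1}}) = 0 for all n and all i ≤ d-h-1, then x^{Cn} H^i_m(R/\overline{J^n}) = 0 for all n and all i ≤ d-h-1. -/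
set_option synthInstance.maxHeartbeats 1000000
set_option maxHeartbeats 1000000

open IsLocalRing

noncomputable section


/-- `J` is a reduction of `I`. -/
def Ideal.IsReductionOf {R : Type} [CommRing R] (J I : Ideal R) : Prop :=
  J ≤ I ∧ ∃ n : ℕ, I ^ (n + 1) = J * I ^ n

/-- Height of an ideal. -/
def idealHeight {R : Type} [CommRing R] (I : Ideal R) : ℕ∞ :=
  ⨅ (p : PrimeSpectrum R) (_ : I ≤ p.asIdeal), Order.height p

/-- Depth of a module over a local ring, via weakly regular sequences in the maximal ideal. -/
def moduleDepth (R M : Type) [CommRing R] [IsLocalRing R] [AddCommGroup M] [Module R M] : ℕ∞ :=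
  sSup {n : ℕ∞ | ∃ rs : List R, (rs.length : ℕ∞) = n ∧ (∀ r ∈ rs, r ∈ maximalIdeal R) ∧
    RingTheory.Sequence.IsWeaklyRegular M rs}

/-- Cohen–Macaulay local ring. -/
def IsCMLocalRing (R : Type) [CommRing R] [IsLocalRing R] : Prop :=
  (moduleDepth R R : WithBot ℕ∞) = ringKrullDim R

/-- Regular local ring. -/
def IsRegLocal (R : Type) [CommRing R] [IsLocalRing R] : Prop :=
  IsNoetherianRing R ∧ ∃ s : Finset R, Ideal.span (s : Set R) = maximalIdeal R ∧
    (s.card : WithBot ℕ∞) = ringKrullDim R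

open CategoryTheory in
/-- The Ext module `Ext^n_R(M, N)`. -/
def ExtMod (R : Type) [CommRing R] (n : ℕ) (M N : ModuleCat R) : ModuleCat R :=
  ((Ext R (ModuleCat R) n).obj (Opposite.op M)).obj N

/-- `J` is a canonical ideal of the local ring `R`: `R/J` is Gorenstein of dimension
`dim R - 1`. -/
def IsCanonicalIdeal (R : Type) [CommRing R] [IsLocalRing R] (J : Ideal R) : Prop :=
  J ≠ ⊥ ∧ J ≠ ⊤ ∧ ∃ d' : ℕ,
    ringKrullDim (R ⧸ J) = (d' : WithBot ℕ∞) ∧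
    (d' : WithBot ℕ∞) + 1 = ringKrullDim R ∧
    moduleDepth R (R ⧸ J) = (d' : ℕ∞) ∧
    Nonempty ((ExtMod R d' (ModuleCat.of R (ResidueField R)) (ModuleCat.of R (R ⧸ J))) ≅
      ModuleCat.of R (ResidueField R))

/-- The `n`-th symbolic power of an ideal `I`: the saturation of `I^n` with respect to
the complement of the union of the minimal primes of `I`. -/
def symb {R : Type} [CommRing R] (I : Ideal R) (n : ℕ) : Ideal R where
  carrier := {r | ∃ s : R, (∀ P ∈ I.minimalPrimes, s ∉ P) ∧ s * r ∈ I ^ n}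
  zero_mem' := ⟨1, fun P hP h1 => hP.1.1.ne_top ((Ideal.eq_top_iff_one P).mpr h1), by simp⟩
  add_mem' := by
    rintro a b ⟨s, hs, h⟩ ⟨t, ht, h'⟩
    refine ⟨s * t, fun P hP hm => ?_, ?_⟩
    · rcases hP.1.1.mem_or_mem hm with h'' | h''
      · exact hs P hP h''
      · exact ht P hP h''
    · have : s * t * (a + b) = t * (s * a) + s * (t * b) := by ring
      rw [this]
      exact add_mem (Ideal.mul_mem_left _ _ h) (Ideal.mul_mem_left _ _ h')
  smul_mem' := by
    rintro c r ⟨s, hs, h⟩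
    refine ⟨s, hs, ?_⟩
    have : s * (c • r) = c * (s * r) := by simp [smul_eq_mul]; ring
    rw [this]
    exact Ideal.mul_mem_left _ _ h

/-- An ideal of pure height one. -/
def PureHeightOne {R : Type} [CommRing R] (I : Ideal R) : Prop :=
  I ≠ ⊥ ∧ I ≠ ⊤ ∧ ∀ P ∈ I.minimalPrimes, idealHeight P = 1

/-- `E` is an injective hull of the residue field of the local ring `R`. -/
def IsInjHullOfResidueField (R E : Type) [CommRing R] [IsLocalRing R] [AddCommGroup E]
    [Module R E] : Prop :=
  Module.Injective R E ∧ ∃ ι : ResidueField R →ₗ[R] E, Function.Injective ι ∧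
    ∀ N : Submodule R E, N ≠ ⊥ → ∃ v ∈ N, v ≠ 0 ∧ v ∈ LinearMap.range ι


open LaurentPolynomial in
/-- The Rees algebra `R[Jt]` inside the Laurent polynomial ring `R[t,t⁻¹]`. -/
def reesL (R : Type) [CommRing R] (J : Ideal R) : Subalgebra R (LaurentPolynomial R) :=
  Algebra.adjoin R ((fun a : R => LaurentPolynomial.C a * LaurentPolynomial.T 1) '' (J : Set R))

open LaurentPolynomial in
/-- The extended Rees algebra `R[Jt, t⁻¹]` inside `R[t,t⁻¹]`. -/
def reesExtL (R : Type) [CommRing R] (J : Ideal R) : Subalgebra R (LaurentPolynomial R) :=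
  Algebra.adjoin R
    ((fun a : R => LaurentPolynomial.C a * LaurentPolynomial.T 1) '' (J : Set R) ∪
      {LaurentPolynomial.T (-1)})

lemma reesL_le_reesExtL (R : Type) [CommRing R] (J : Ideal R) : reesL R J ≤ reesExtL R J :=
  Algebra.adjoin_mono Set.subset_union_left

/-- `S'` is the integral closure of the extended Rees algebra `R[Jt,t⁻¹]` in `R[t,t⁻¹]`. -/
def IsIntClosureOfReesExt (R : Type) [CommRing R] (J : Ideal R)
    (S' : Subalgebra R (LaurentPolynomial R)) : Prop :=
  reesExtL R J ≤ S' ∧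
    ∀ z : LaurentPolynomial R, z ∈ S' ↔ IsIntegral (↥(reesExtL R J)) z

/-- The element `t⁻¹` as an element of any subalgebra containing the extended Rees algebra. -/
def tinvS (R : Type) [CommRing R] (J : Ideal R) (S' : Subalgebra R (LaurentPolynomial R))
    (h : reesExtL R J ≤ S') : ↥S' :=
  ⟨LaurentPolynomial.T (-1), h (Algebra.subset_adjoin (Or.inr rfl))⟩

/-!
Local cohomology `H^i_I` is the filtered colimit of the functors `Ext^i(R/I^k, -)`. Each of these
sends a short exact sequence to a sequence exact in the middle (derive the short exact sequence
`Hom(P, -)` over a projective resolution), and filtered colimits of modules are exact, so `H^i_I`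
does too. Applied to `0 → J_n/J_{n+1} → R/J_{n+1} → R/J_n → 0`: if `r` kills
`H^i(J_n/J_{n+1})` and `r^n` kills `H^i(R/J_n)`, then for `z ∈ H^i(R/J_{n+1})` the element `r^n z`
comes from `H^i(J_n/J_{n+1})`, so `r^{n+1} z = 0`; the induction starts at `R/J_0 = 0`.
-/

open CategoryTheory Limits Opposite

section Colimit

variable {C D J : Type*} [Category C] [Category D] [Category J] [Abelian D]

lemma CategoryTheory.ShortComplex.exact_of_forall_exact_map_evaluation (S : ShortComplex (J ⥤ D))
    (h : ∀ j, (S.map ((evaluation J D).obj j)).Exact) : S.Exact := by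
  rw [ShortComplex.exact_iff_isZero_homology]
  refine Functor.isZero _ fun j => ?_
  exact ((ShortComplex.exact_iff_isZero_homology _).mp (h j)).of_iso
    (S.mapHomologyIso ((evaluation J D).obj j)).symm

variable [HasZeroMorphisms C]

instance (F : J ⥤ C ⥤ D) [∀ j, (F.obj j).PreservesZeroMorphisms] :
    F.flip.PreservesZeroMorphisms where
  map_zero _ _ := by ext; simp

instance [HasColimitsOfShape J D] (F : J ⥤ C ⥤ D) [∀ j, (F.obj j).PreservesZeroMorphisms] :
    (colimit F).PreservesZeroMorphisms where
  map_zero X Y :=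
    (isColimitOfPreserves ((evaluation C D).obj X) (colimit.isColimit F)).hom_ext fun j => by
      simp [← NatTrans.naturality]

lemma CategoryTheory.ShortComplex.exact_map_colimit [HasColimitsOfShape J D]
    [HasExactColimitsOfShape J D] (F : J ⥤ C ⥤ D) [∀ j, (F.obj j).PreservesZeroMorphisms]
    (S : ShortComplex C) (h : ∀ j, (S.map (F.obj j)).Exact) : (S.map (colimit F)).Exact :=
  colim.exact_mapShortComplex (S := S.map F.flip)
    (exact_of_forall_exact_map_evaluation _ h)
    (isColimitOfPreserves ((evaluation C D).obj S.X₁) (colimit.isColimit F))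
    (isColimitOfPreserves ((evaluation C D).obj S.X₂) (colimit.isColimit F))
    (isColimitOfPreserves ((evaluation C D).obj S.X₃) (colimit.isColimit F))
    ((colimit F).map S.f) ((colimit F).map S.g)
    (fun j => ((colimit.ι F j).naturality S.f).symm)
    (fun j => ((colimit.ι F j).naturality S.g).symm)

end Colimit

section LeftDerived

variable {C D : Type*} [Category C] [Category D] [Abelian C] [EnoughProjectives C] [Abelian D]

@[simp]
lemma CategoryTheory.NatTrans.leftDerived_zero (F G : C ⥤ D) [F.Additive] [G.Additive] (n : ℕ) :
    NatTrans.leftDerived (0 : F ⟶ G) n = 0 := by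
  ext X
  rw [ProjectiveResolution.leftDerived_app_eq _ (ProjectiveResolution.of X)]
  have : (NatTrans.mapHomologicalComplex (0 : F ⟶ G) (ComplexShape.down ℕ)).app
      (ProjectiveResolution.of X).complex = 0 := by ext; rfl
  rw [this, Functor.map_zero, zero_comp, comp_zero, NatTrans.app_zero]

lemma CategoryTheory.NatTrans.exact_leftDerived_app {F₁ F₂ F₃ : C ⥤ D}
    [F₁.Additive] [F₂.Additive] [F₃.Additive] (α : F₁ ⟶ F₂) (β : F₂ ⟶ F₃) (hαβ : α ≫ β = 0)
    (h : ∀ (P : C) [Projective P], (ShortComplex.mk (α.app P) (β.app P)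
      (by rw [← NatTrans.comp_app, hαβ, NatTrans.app_zero])).ShortExact)
    (n : ℕ) (X : C) :
    (ShortComplex.mk ((NatTrans.leftDerived α n).app X) ((NatTrans.leftDerived β n).app X)
      (by rw [← NatTrans.comp_app, ← NatTrans.leftDerived_comp, hαβ, leftDerived_zero,
        NatTrans.app_zero])).Exact := by
  let P := ProjectiveResolution.of X
  let T : ShortComplex (HomologicalComplex D (ComplexShape.down ℕ)) :=
    ShortComplex.mk ((NatTrans.mapHomologicalComplex α _).app P.complex)
      ((NatTrans.mapHomologicalComplex β _).app P.complex)
      (by ext k; exact NatTrans.congr_app hαβ _)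
  have hT : T.ShortExact :=
    HomologicalComplex.shortExact_of_degreewise_shortExact _ fun k => h (P.complex.X k)
  refine ShortComplex.exact_of_iso ?_ (hT.homology_exact₂ n)
  refine ShortComplex.isoMk (P.isoLeftDerivedObj F₁ n).symm (P.isoLeftDerivedObj F₂ n).symm
    (P.isoLeftDerivedObj F₃ n).symm ?_ ?_
  · simp only [ProjectiveResolution.leftDerived_app_eq α P n]; exact Iso.inv_hom_id_assoc _ _
  · simp only [ProjectiveResolution.leftDerived_app_eq β P n]; exact Iso.inv_hom_id_assoc _ _

end LeftDerived

section Ext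

variable {R : Type*} [Ring R] {C : Type*} [Category C] [Abelian C] [Linear R C]

lemma CategoryTheory.ShortComplex.ShortExact.map_linearCoyoneda {S : ShortComplex C}
    (hS : S.ShortExact) (P : C) [Projective P] :
    (S.map ((linearCoyoneda R C).obj (Opposite.op P))).ShortExact := by
  have := hS.mono_f
  have := hS.epi_g
  exact
    { exact := (ShortComplex.moduleCat_exact_iff _).mpr fun φ hφ =>
        ⟨hS.exact.lift φ hφ, hS.exact.lift_f φ hφ⟩
      mono_f := (ModuleCat.mono_iff_injective _).mpr fun φ ψ h => (cancel_mono S.f).mp h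
      epi_g := (ModuleCat.epi_iff_surjective _).mpr fun φ =>
        ⟨Projective.factorThru φ S.g, Projective.factorThru_comp φ S.g⟩ }

variable [EnoughProjectives C]

lemma isZero_Ext_obj_obj_of_isZero (n : ℕ) (X : C) {Y : C} (hY : IsZero Y) :
    IsZero (((Ext R C n).obj (op X)).obj Y) := by
  refine IsZero.of_iso (ShortComplex.isZero_homology_of_isZero_X₂ _ ?_)
    ((ProjectiveResolution.of X).isoExt n Y)
  rw [IsZero.iff_id_eq_zero]
  ext φ
  exact hY.eq_of_tgt _ _

instance (n : ℕ) (X : Cᵒᵖ) : ((Ext R C n).obj X).PreservesZeroMorphisms :=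
  Functor.preservesZeroMorphisms_of_map_zero_object
    (isZero_Ext_obj_obj_of_isZero n X.unop (isZero_zero C)).isoZero

lemma CategoryTheory.ShortComplex.ShortExact.exact_map_Ext {S : ShortComplex C}
    (hS : S.ShortExact) (n : ℕ) (X : Cᵒᵖ) : (S.map ((Ext R C n).obj X)).Exact := by
  have hzero : ((linearYoneda R C).map S.g).rightOp ≫ ((linearYoneda R C).map S.f).rightOp = 0 := by
    ext P
    apply Quiver.Hom.unop_inj
    ext (φ : P ⟶ S.X₁)
    exact (show (φ ≫ S.f) ≫ S.g = 0 by simp)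
  exact (NatTrans.exact_leftDerived_app _ _ hzero (fun P _ => (hS.map_linearCoyoneda P).op)
    n X.unop).unop

end Ext

namespace localCohomology

variable {R : Type} [CommRing R] (I : Ideal R) (i : ℕ)

instance {D : Type} [SmallCategory D] (F : D ⥤ Ideal R) (j : Dᵒᵖ) :
    ((diagram F i).obj j).PreservesZeroMorphisms :=
  inferInstanceAs ((Ext R _ i).obj _).PreservesZeroMorphisms

instance : (localCohomology I i).PreservesZeroMorphisms :=
  inferInstanceAs (colimit (diagram (idealPowersDiagram I) i)).PreservesZeroMorphisms

lemma _root_.CategoryTheory.ShortComplex.ShortExact.exact_map_localCohomology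
    {S : ShortComplex (ModuleCat R)} (hS : S.ShortExact) : (S.map (localCohomology I i)).Exact :=
  ShortComplex.exact_map_colimit _ S fun _ => hS.exact_map_Ext i _

end localCohomology

lemma CategoryTheory.ShortComplex.Exact.mul_smul_eq_zero {R : Type*} [Ring R]
    {S : ShortComplex (ModuleCat R)} (hS : S.Exact) {r s : R} (h₁ : ∀ w : S.X₁, r • w = 0)
    {z : S.X₂} (hz : s • S.g z = 0) : (r * s) • z = 0 := by
  obtain ⟨w, hw⟩ := (ShortComplex.moduleCat_exact_iff _).mp hS (s • z) (by simpa using hz)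
  rw [mul_smul, ← hw, ← map_smul, h₁, map_zero]

namespace Submodule

variable {R M : Type*} [Ring R] [AddCommGroup M] [Module R M] {N N' : Submodule R M}

def quotientShortComplex (h : N' ≤ N) : ShortComplex (ModuleCat R) :=
  ModuleCat.shortComplexOfCompEqZero (N'.comap N.subtype |>.mapQ N' N.subtype le_rfl)
    (factor h) (by ext; simp)

lemma shortExact_quotientShortComplex (h : N' ≤ N) : (quotientShortComplex h).ShortExact := by
  refine ModuleCat.shortComplex_shortExact _ (fun y => ⟨fun hy => ?_, ?_⟩) ?_ (factor_surjective h)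
  · obtain ⟨m, rfl⟩ := N'.mkQ_surjective y
    exact ⟨N'.comap N.subtype |>.mkQ ⟨m, (Quotient.mk_eq_zero N).mp hy⟩, rfl⟩
  · rintro ⟨w, rfl⟩
    exact (quotientShortComplex h).moduleCat_zero_apply w
  · refine (injective_iff_map_eq_zero _).mpr fun y hy => ?_
    obtain ⟨q, rfl⟩ := mkQ_surjective _ y
    exact (Quotient.mk_eq_zero _).mpr ((Quotient.mk_eq_zero N').mp hy)

end Submodule

lemma localCohomology.pow_smul_quotient_eq_zero {R : Type} [CommRing R] (I : Ideal R) (i : ℕ)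
    {J : ℕ → Ideal R} (hJ : ∀ n, J (n + 1) ≤ J n) (hJ₀ : J 0 = ⊤) {r : R}
    (hr : ∀ (n : ℕ) (z : (localCohomology I i).obj
      (ModuleCat.of R (↥(J n) ⧸ Submodule.comap (J n).subtype (J (n + 1))))), r • z = 0)
    (n : ℕ) (z : (localCohomology I i).obj (ModuleCat.of R (R ⧸ J n))) : r ^ n • z = 0 := by
  induction n with
  | zero =>
    have : Subsingleton (R ⧸ J 0) := Submodule.Quotient.subsingleton_iff.mpr hJ₀
    have := ModuleCat.subsingleton_of_isZero
      ((localCohomology I i).map_isZero (ModuleCat.isZero_of_subsingleton (.of R (R ⧸ J 0))))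
    exact Subsingleton.elim _ _
  | succ n ih =>
    rw [pow_succ']
    exact ((Submodule.shortExact_quotientShortComplex (hJ n)).exact_map_localCohomology I i
      ).mul_smul_eq_zero (hr n) (ih _)

lemma memIntCl.mono {R : Type} [CommRing R] {I I' : Ideal R} (h : I ≤ I') {r : R}
    (hr : memIntCl I r) : memIntCl I' r :=
  let ⟨t, ht, a, ha, heq⟩ := hr
  ⟨t, ht, a, fun j h₁ h₂ => Ideal.pow_right_mono h j (ha j h₁ h₂), heq⟩

lemma memIntCl_top {R : Type} [CommRing R] (r : R) : memIntCl ⊤ r :=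
  ⟨1, one_pos, fun _ => -r, fun _ _ _ => by simp [Ideal.top_pow], by simp⟩

theorem linear_annihilator_of_quotients_general {R : Type} [CommRing R] [IsLocalRing R]
    (d : ℕ)
    (J : Ideal R) (h : ℕ)
    (Jbar : ℕ → Ideal R) (hJbar : ∀ (n : ℕ) (r : R), r ∈ Jbar n ↔ memIntCl (J ^ n) r)
    (x : R)
    (C : ℕ)
    (hann : ∀ (n i : ℕ), i ≤ d - h - 1 →
      ∀ z : ((localCohomology (maximalIdeal R) i).obj
        (ModuleCat.of R (↥(Jbar n) ⧸ Submodule.comap (Jbar n).subtype (Jbar (n + 1))))),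
        x ^ C • z = 0) :
    ∀ (n i : ℕ), i ≤ d - h - 1 →
      ∀ z : ((localCohomology (maximalIdeal R) i).obj (ModuleCat.of R (R ⧸ Jbar n))),
        x ^ (C * n) • z = 0 := by
  have hJbar_succ : ∀ n, Jbar (n + 1) ≤ Jbar n := fun n r hr =>
    (hJbar n r).mpr (((hJbar (n + 1) r).mp hr).mono (Ideal.pow_le_pow_right n.le_succ))
  have hJbar_zero : Jbar 0 = ⊤ := eq_top_iff.mpr fun r _ =>
    (hJbar 0 r).mpr (by rw [pow_zero, Ideal.one_eq_top]; exact memIntCl_top r)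
  intro n i hi z
  rw [pow_mul]
  exact localCohomology.pow_smul_quotient_eq_zero _ i hJbar_succ hJbar_zero (hann · i hi) n z

/-- Let `(R,𝔪)` be an excellent local Cohen–Macaulay normal domain of dimension `d`,
`J` generated by at most `h` elements, and `x` such that the associated graded algebra
of integral closures becomes Cohen–Macaulay after inverting `x`.  If
`x^C · H^i_𝔪(\overline{Jⁿ}/\overline{J^{n+1}}) = 0` for all `n` and all `i ≤ d-h-1`, then
`x^{Cn} · H^i_𝔪(R/\overline{Jⁿ}) = 0` for all `n` and all `i ≤ d-h-1`. -/
theorem linear_annihilator_of_quotients {R : Type} [CommRing R] [IsLocalRing R]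
    [IsNoetherianRing R] [IsDomain R] [IsIntegrallyClosed R] (hCMR : IsCMLocalRing R)
    (d : ℕ) (hdim : ringKrullDim R = (d : WithBot ℕ∞))
    (J : Ideal R) (h : ℕ) (hgen : ∃ s : Finset R, s.card ≤ h ∧ J = Ideal.span (s : Set R))
    (Jbar : ℕ → Ideal R) (hJbar : ∀ (n : ℕ) (r : R), r ∈ Jbar n ↔ memIntCl (J ^ n) r)
    (S' : Subalgebra R (LaurentPolynomial R)) (hS' : IsIntClosureOfReesExt R J S')
    (x : R)
    (hCM : ∀ Q : PrimeSpectrum (↥S' ⧸ Ideal.span {tinvS R J S' hS'.1}),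
      (Ideal.Quotient.mk (Ideal.span {tinvS R J S' hS'.1})) (algebraMap R ↥S' x) ∉ Q.asIdeal →
        IsCMLocalRing
          (@Localization.AtPrime _ (Ideal.Quotient.commRing _).toCommSemiring Q.asIdeal _))
    (C : ℕ)
    (hann : ∀ (n i : ℕ), i ≤ d - h - 1 →
      ∀ z : ((localCohomology (maximalIdeal R) i).obj
        (ModuleCat.of R (↥(Jbar n) ⧸ Submodule.comap (Jbar n).subtype (Jbar (n + 1))))),
        x ^ C • z = 0) :
    ∀ (n i : ℕ), i ≤ d - h - 1 →
      ∀ z : ((localCohomology (maximalIdeal R) i).obj (ModuleCat.of R (R ⧸ Jbar n))),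
        x ^ (C * n) • z = 0 :=
  linear_annihilator_of_quotients_general d J h Jbar hJbar x C hann

end
end

section
/- Let R be a Noetherian ring of prime characteristic p, x_1,...,x_d a regular sequence, J_1 ⊆ R an ideal, and suppose c r^{p^e}(x_1 ⋯ x_d)^{s p^e} ∈ (x_1^{(t+s-1)p^e} J_1^{[p^e]}, x_2^{(t+s)p^e}, ..., x_d^{(t+s)p^e}). Then c r^{p^e} (x_2 ⋯ x_d)^{s p^e} ∈ (x_1^{(t-1)p^e} J_1^{[p^e]}, x_2^{(t+s)p^e}, ..., x_d^{(t+s)p^e}). -/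
/-!
Powers of a regular sequence are regular, so `x₁^{s p^e}, x₂^{(t+s) p^e}, …, x_d^{(t+s) p^e}`
is regular. In a regular sequence `y₀, …, y_k` the first element is a nonzerodivisor modulo
`(y₁, …, y_k)`: if `y₀ z ∈ (y₁, …, y_k)`, the coefficient of `y_k` lies in
`(y₀, …, y_{k-1})`, and moving its `y₀`-part into `z` reduces to `k - 1`. So `x₁^{s p^e}`
can be cancelled from `x₁^{(t+s-1) p^e} = x₁^{s p^e} x₁^{(t-1) p^e}` modulo
`(x₂^{(t+s) p^e}, …, x_d^{(t+s) p^e})`.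
-/

open Ideal

section RegularMod

variable {R : Type*} [CommRing R]

/-- `IsRegularMod I l`: `l` is a weakly regular sequence on `R ⧸ I`, with all quotients
taken as ideals of `R`. -/
def IsRegularMod (I : Ideal R) : List R → Prop
  | [] => True
  | a :: l => IsSMulRegular (R ⧸ I) a ∧ IsRegularMod (span {a} ⊔ I) l

lemma isRegularMod_cons (I : Ideal R) (a : R) (l : List R) :
    IsRegularMod I (a :: l) ↔ IsSMulRegular (R ⧸ I) a ∧ IsRegularMod (span {a} ⊔ I) l :=
  Iff.rfl

lemma isRegularMod_top : ∀ l : List R, IsRegularMod ⊤ l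
  | [] => trivial
  | _ :: l =>
    ⟨(isSMulRegular_quotient_iff_mem_of_smul_mem _ _).mpr fun _ _ => Submodule.mem_top,
      by simpa only [sup_top_eq] using isRegularMod_top l⟩

lemma isRegularMod_append_iff : ∀ (s t : List R) (I : Ideal R),
    IsRegularMod I (s ++ t) ↔ IsRegularMod I s ∧ IsRegularMod (ofList s ⊔ I) t
  | [], t, I => by simp [IsRegularMod]
  | a :: s, t, I => by
    rw [List.cons_append, isRegularMod_cons, isRegularMod_cons, isRegularMod_append_iff,
      and_assoc, ofList_cons, sup_assoc, sup_left_comm]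

lemma isRegularMod_ofList_of_isWeaklyRegular_append : ∀ (pre l : List R),
    RingTheory.Sequence.IsWeaklyRegular R (pre ++ l) → IsRegularMod (ofList pre) l
  | _, [], _ => trivial
  | pre, a :: l, h => by
    refine ⟨?_, ?_⟩
    · have hI : (ofList ((pre ++ a :: l).take pre.length) • ⊤ : Ideal R) = ofList pre := by
        rw [List.take_left, smul_eq_mul, mul_top]
      have := h.regular_mod_prev pre.length (by simp)
      rw [hI] at this
      simpa using this
    · have := isRegularMod_ofList_of_isWeaklyRegular_append (pre ++ [a]) l (by simpa using h)
      simpa [sup_comm] using this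

lemma IsRegularMod.of_isWeaklyRegular {l : List R}
    (h : RingTheory.Sequence.IsWeaklyRegular R l) : IsRegularMod ⊥ l := by
  simpa using isRegularMod_ofList_of_isWeaklyRegular_append [] l h

lemma colon_singleton_sup_span_singleton {A C : Ideal R} {g b : R} (hC : A.colon {g} = C)
    (hb : IsSMulRegular (R ⧸ span {g} ⊔ A) b) :
    (span {b} ⊔ A).colon {g} = span {b} ⊔ C := by
  ext y
  simp only [Submodule.mem_colon_singleton, smul_eq_mul, mem_span_singleton_sup]
  constructor
  · rintro ⟨v, α, hα, hy⟩
    have hv : b * v ∈ span {g} ⊔ A := by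
      rw [mem_span_singleton_sup]
      exact ⟨y, -α, neg_mem hα, by rw [← hy]; ring⟩
    obtain ⟨w, α', hα', rfl⟩ :=
      mem_span_singleton_sup.mp (mem_of_isSMulRegular_quotient_of_smul_mem hb hv)
    refine ⟨w, y - w * b, ?_, by ring⟩
    rw [← hC, Submodule.mem_colon_singleton, smul_eq_mul]
    convert A.add_mem hα (A.mul_mem_left b hα') using 1
    linear_combination -hy
  · rintro ⟨w, γ, hγ, rfl⟩
    rw [← hC, Submodule.mem_colon_singleton, smul_eq_mul] at hγ
    exact ⟨w * g, γ * g, hγ, by ring⟩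

/-- Multiplication by `g` gives a short exact sequence
`0 → R ⧸ C → R ⧸ A → R ⧸ (g, A) → 0`, and a sequence regular on both ends is regular in the
middle. -/
lemma IsRegularMod.of_sup_span_singleton {A C : Ideal R} {g : R} (hC : A.colon {g} = C) :
    ∀ {l : List R}, IsRegularMod (span {g} ⊔ A) l → IsRegularMod C l → IsRegularMod A l
  | [], _, _ => trivial
  | b :: l, ⟨hbA, hlA⟩, ⟨hbC, hlC⟩ => by
    refine ⟨(isSMulRegular_quotient_iff_mem_of_smul_mem _ _).mpr fun z hz => ?_, ?_⟩
    · have hz' : z ∈ span {g} ⊔ A :=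
        mem_of_isSMulRegular_quotient_of_smul_mem hbA (le_sup_right (a := span {g}) hz)
      obtain ⟨u, α, hα, rfl⟩ := mem_span_singleton_sup.mp hz'
      have hu : b * u ∈ C := by
        rw [← hC, Submodule.mem_colon_singleton, smul_eq_mul]
        convert A.sub_mem hz (A.mul_mem_left b hα) using 1
        ring
      have hu' := mem_of_isSMulRegular_quotient_of_smul_mem hbC hu
      rw [← hC, Submodule.mem_colon_singleton, smul_eq_mul] at hu'
      exact A.add_mem hu' hα
    · exact of_sup_span_singleton (colon_singleton_sup_span_singleton hC hbA)
        (by rwa [sup_left_comm]) hlC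

lemma colon_pow_span_singleton_pow_succ_sup {I : Ideal R} {a : R}
    (ha : IsSMulRegular (R ⧸ I) a) (n : ℕ) :
    (span {a ^ (n + 1)} ⊔ I).colon {a ^ n} = span {a} ⊔ I := by
  ext y
  simp only [Submodule.mem_colon_singleton, smul_eq_mul, mem_span_singleton_sup]
  constructor
  · rintro ⟨u, i, hi, hy⟩
    refine ⟨u, y - u * a, ?_, by ring⟩
    refine mem_of_isSMulRegular_quotient_of_smul_mem (ha.pow n) ?_
    convert hi using 1
    linear_combination -hy
  · rintro ⟨u, i, hi, rfl⟩
    exact ⟨u, i * a ^ n, I.mul_mem_right _ hi, by ring⟩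

/-- Induction on `n` along `0 → R ⧸ (a, I) → R ⧸ (a ^ (n + 1), I) → R ⧸ (a ^ n, I) → 0`,
the first map being multiplication by `a ^ n`. -/
lemma IsRegularMod.sup_span_pow {I : Ideal R} {a : R} {l : List R}
    (h : IsRegularMod I (a :: l)) : ∀ n : ℕ, IsRegularMod (span {a ^ n} ⊔ I) l
  | 0 => by simpa using isRegularMod_top l
  | n + 1 => by
    have hle : span {a ^ (n + 1)} ≤ span {a ^ n} :=
      span_singleton_le_span_singleton.mpr (pow_dvd_pow a n.le_succ)
    refine of_sup_span_singleton (colon_pow_span_singleton_pow_succ_sup h.1 n) ?_ h.2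
    rw [← sup_assoc, sup_eq_left.mpr hle]
    exact h.sup_span_pow n

lemma IsRegularMod.cons_pow {I : Ideal R} {a : R} {l : List R}
    (h : IsRegularMod I (a :: l)) (n : ℕ) : IsRegularMod I (a ^ n :: l) :=
  ⟨h.1.pow n, h.sup_span_pow n⟩

lemma IsRegularMod.map_pow (n : ℕ) :
    ∀ {I : Ideal R} {l : List R}, IsRegularMod I l → IsRegularMod I (l.map (· ^ n))
  | _, [], _ => trivial
  | _, _ :: _, h => ⟨(h.cons_pow n).1, (h.cons_pow n).2.map_pow n⟩

lemma IsRegularMod.isSMulRegular_head {I : Ideal R} {a : R} {l : List R}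
    (h : IsRegularMod I (a :: l)) : IsSMulRegular (R ⧸ ofList l ⊔ I) a := by
  induction l using List.reverseRecOn with
  | nil => rw [ofList_nil, bot_sup_eq]; exact h.1
  | append_singleton l w ih =>
    rw [← List.cons_append, isRegularMod_append_iff] at h
    obtain ⟨hal, hw, -⟩ := h
    rw [ofList_cons, sup_assoc] at hw
    rw [ofList_append, ofList_singleton, sup_comm (ofList l), sup_assoc]
    refine (isSMulRegular_quotient_iff_mem_of_smul_mem _ _).mpr fun z hz => ?_
    obtain ⟨u, β, hβ, hzu⟩ := mem_span_singleton_sup.mp hz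
    have hu : w * u ∈ span {a} ⊔ (ofList l ⊔ I) :=
      mem_span_singleton_sup.mpr ⟨z, -β, neg_mem hβ, by linear_combination -hzu⟩
    obtain ⟨v, γ, hγ, rfl⟩ :=
      mem_span_singleton_sup.mp (mem_of_isSMulRegular_quotient_of_smul_mem hw hu)
    refine mem_span_singleton_sup.mpr ⟨v, z - v * w, ?_, by ring⟩
    refine mem_of_isSMulRegular_quotient_of_smul_mem (ih hal) ?_
    convert add_mem hβ (Ideal.mul_mem_right w _ hγ) using 1
    linear_combination -hzu

lemma mem_span_singleton_mul_sup_of_mul_mem {P J : Ideal R} {a b u : R}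
    (ha : IsSMulRegular (R ⧸ P) a) (h : a * u ∈ span {a * b} * J ⊔ P) :
    u ∈ span {b} * J ⊔ P := by
  obtain ⟨_, hq, w, hw, he⟩ := Submodule.mem_sup.mp h
  obtain ⟨j, hj, rfl⟩ := mem_span_singleton_mul.mp hq
  have hu : u - b * j ∈ P := mem_of_isSMulRegular_quotient_of_smul_mem ha <| by
    convert hw using 1
    linear_combination -he
  exact Submodule.mem_sup.mpr
    ⟨b * j, mem_span_singleton_mul.mpr ⟨j, hj, rfl⟩, u - b * j, hu, by ring⟩

lemma ofList_ofFn {n : ℕ} (f : Fin n → R) : ofList (List.ofFn f) = span (Set.range f) :=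
  congrArg span (Set.ext (List.mem_ofFn' f))

end RegularMod

theorem frobenius_colon_cancellation_general {R : Type} [CommRing R]
    (p : ℕ) {d : ℕ} (x : Fin (d + 1) → R)
    (hreg : RingTheory.Sequence.IsRegular R (List.ofFn x))
    (J₁ : Ideal R) (c r : R) (e s t : ℕ) (ht : 1 ≤ t)
    (h : c * r ^ (p ^ e) * (∏ i, x i) ^ (s * p ^ e) ∈
      Ideal.span {x 0 ^ ((t + s - 1) * p ^ e)} *
          Ideal.span ((fun a => a ^ (p ^ e)) '' (J₁ : Set R)) ⊔
        Ideal.span (Set.range fun i : Fin d => x i.succ ^ ((t + s) * p ^ e))) :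
    c * r ^ (p ^ e) * (∏ i : Fin d, x i.succ) ^ (s * p ^ e) ∈
      Ideal.span {x 0 ^ ((t - 1) * p ^ e)} *
          Ideal.span ((fun a => a ^ (p ^ e)) '' (J₁ : Set R)) ⊔
        Ideal.span (Set.range fun i : Fin d => x i.succ ^ ((t + s) * p ^ e)) := by
  have hx := IsRegularMod.of_isWeaklyRegular hreg.toIsWeaklyRegular
  rw [List.ofFn_succ] at hx
  have hpow : IsRegularMod ⊥ (x 0 ^ (s * p ^ e) ::
      (List.ofFn fun i : Fin d => x i.succ).map (· ^ ((t + s) * p ^ e))) :=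
    IsRegularMod.cons_pow ⟨hx.1, hx.2.map_pow _⟩ _
  have hcancel := hpow.isSMulRegular_head
  rw [List.map_ofFn, ofList_ofFn, sup_bot_eq] at hcancel
  refine mem_span_singleton_mul_sup_of_mul_mem hcancel ?_
  have hexp : (t + s - 1) * p ^ e = s * p ^ e + (t - 1) * p ^ e := by
    rw [← add_mul]; congr 1; omega
  rw [Fin.prod_univ_succ, mul_pow, hexp, pow_add] at h
  convert h using 1
  ring

/-- Cancellation of powers of `x₁` along a regular sequence, in a ring of prime
characteristic `p`: if `c·r^{p^e}·(x₁⋯x_d)^{s p^e}` lies in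
`(x₁^{(t+s-1)p^e}·J₁^{[p^e]}, x₂^{(t+s)p^e}, …, x_d^{(t+s)p^e})`, then
`c·r^{p^e}·(x₂⋯x_d)^{s p^e}` lies in
`(x₁^{(t-1)p^e}·J₁^{[p^e]}, x₂^{(t+s)p^e}, …, x_d^{(t+s)p^e})`. -/
theorem frobenius_colon_cancellation {R : Type} [CommRing R] [IsNoetherianRing R]
    (p : ℕ) [Fact p.Prime] [CharP R p] {d : ℕ} (x : Fin (d + 1) → R)
    (hreg : RingTheory.Sequence.IsRegular R (List.ofFn x))
    (J₁ : Ideal R) (c r : R) (e s t : ℕ) (ht : 1 ≤ t)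
    (h : c * r ^ (p ^ e) * (∏ i, x i) ^ (s * p ^ e) ∈
      Ideal.span {x 0 ^ ((t + s - 1) * p ^ e)} *
          Ideal.span ((fun a => a ^ (p ^ e)) '' (J₁ : Set R)) ⊔
        Ideal.span (Set.range fun i : Fin d => x i.succ ^ ((t + s) * p ^ e))) :
    c * r ^ (p ^ e) * (∏ i : Fin d, x i.succ) ^ (s * p ^ e) ∈
      Ideal.span {x 0 ^ ((t - 1) * p ^ e)} *
          Ideal.span ((fun a => a ^ (p ^ e)) '' (J₁ : Set R)) ⊔
        Ideal.span (Set.range fun i : Fin d => x i.succ ^ ((t + s) * p ^ e)) :=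
  frobenius_colon_cancellation_general p x hreg J₁ c r e s t ht h
end
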